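/- Let F ∈ ℂ[x,y,s,t] be an irreducible polynomial of total degree δ such that none of F_x, F_y, F_s, F_t is identically zero. Let γ be a popular curve and let γ* be an associated curve of γ, i.e. an irreducible algebraic curve with γ ⊆ γ_{s,t} for every (s,t) ∈ γ*. Then γ×γ×γ* ⊆ V ∩ Z(G), where V := {(x,y,x',y',s,t) ∈ ℂ⁶ : F(x,y,s,t) = 0 and F(x',y',s,t) = 0} and G := F_s(x,y,s,t)·F_t(x',y',s,t) − F_s(x',y',s,t)·F_t(x,y,s,t); moreover γ×γ×γ* is not contained in ℂ⁴×𝒯. -/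

import Mathlib

open MvPolynomial

noncomputable section

def ev4 (F : MvPolynomial (Fin 4) ℂ) (x y s t : ℂ) : ℂ := eval ![x, y, s, t] F

def ev2 (g : MvPolynomial (Fin 2) ℂ) (p : ℂ × ℂ) : ℂ := eval ![p.1, p.2] g

def curveOf (F : MvPolynomial (Fin 4) ℂ) (c d : ℂ) : Set (ℂ × ℂ) :=
  {p : ℂ × ℂ | ev4 F p.1 p.2 c d = 0}

def TT (F : MvPolynomial (Fin 4) ℂ) : Set (ℂ × ℂ) :=
  {q : ℂ × ℂ | ∀ x y : ℂ, ev4 F x y q.1 q.2 = 0}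

def IsIrredCurve (γ : Set (ℂ × ℂ)) : Prop :=
  ∃ g : MvPolynomial (Fin 2) ℂ, Irreducible g ∧ γ = {p : ℂ × ℂ | ev2 g p = 0}

def IsPopular (F : MvPolynomial (Fin 4) ℂ) (δ : ℕ) (γ : Set (ℂ × ℂ)) : Prop :=
  IsIrredCurve γ ∧ ∃ P : Finset (ℂ × ℂ), δ ^ 2 + 1 ≤ P.card ∧
    ∀ q ∈ P, q ∉ TT F ∧ γ ⊆ curveOf F q.1 q.2

/-- The variety `V ⊂ ℂ⁶`, with coordinates `(x, y, x', y', s, t)`. -/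
def Vvar (F : MvPolynomial (Fin 4) ℂ) : Set (Fin 6 → ℂ) :=
  {w | eval ![w 0, w 1, w 4, w 5] F = 0 ∧ eval ![w 2, w 3, w 4, w 5] F = 0}

/-- The value of `G = F_s(x,y,s,t)·F_t(x',y',s,t) − F_s(x',y',s,t)·F_t(x,y,s,t)` at a point
`w = (x,y,x',y',s,t) ∈ ℂ⁶`. -/
def Gval (F : MvPolynomial (Fin 4) ℂ) (w : Fin 6 → ℂ) : ℂ :=
  eval ![w 0, w 1, w 4, w 5] (pderiv 2 F) * eval ![w 2, w 3, w 4, w 5] (pderiv 3 F) -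
    eval ![w 2, w 3, w 4, w 5] (pderiv 2 F) * eval ![w 0, w 1, w 4, w 5] (pderiv 3 F)

/-- The product set `γ × γ × γ* ⊂ ℂ⁶`. -/
def tripleProd (γ γs : Set (ℂ × ℂ)) : Set (Fin 6 → ℂ) :=
  {w | (w 0, w 1) ∈ γ ∧ (w 2, w 3) ∈ γ ∧ (w 4, w 5) ∈ γs}

namespace Lemma32Aux

lemma vec2_eq (v : Fin 2 → ℂ) : (![v 0, v 1] : Fin 2 → ℂ) = v := by
  funext i; fin_cases i <;> rfl

lemma vec4_eq (v : Fin 4 → ℂ) : (![v 0, v 1, v 2, v 3] : Fin 4 → ℂ) = v := by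
  funext i; fin_cases i <;> rfl

lemma mem_radical_span {n : ℕ} (h p : MvPolynomial (Fin n) ℂ)
    (hv : ∀ v : Fin n → ℂ, eval v h = 0 → eval v p = 0) :
    p ∈ (Ideal.span {h} : Ideal (MvPolynomial (Fin n) ℂ)).radical := by
  rw [← vanishingIdeal_zeroLocus_eq_radical (K := ℂ), mem_vanishingIdeal_iff]
  intro x hx
  exact hv x (hx h (Ideal.subset_span rfl))

lemma dvd_of_vanishing (g p : MvPolynomial (Fin 2) ℂ) (hg : Irreducible g)
    (hv : ∀ v : Fin 2 → ℂ, eval v g = 0 → eval v p = 0) : g ∣ p := by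
  have hprime : Prime g := UniqueFactorizationMonoid.irreducible_iff_prime.mp hg
  have hpr : (Ideal.span ({g} : Set (MvPolynomial (Fin 2) ℂ))).IsPrime :=
    (Ideal.span_singleton_prime hprime.ne_zero).mpr hprime
  have := mem_radical_span g p hv
  rw [hpr.radical, Ideal.mem_span_singleton] at this
  exact this

lemma exists_zero (g : MvPolynomial (Fin 2) ℂ) (hg : Irreducible g) :
    ∃ v : Fin 2 → ℂ, eval v g = 0 := by
  by_contra hc
  push_neg at hc
  have h1 : (1 : MvPolynomial (Fin 2) ℂ) ∈ (Ideal.span {g}).radical :=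
    mem_radical_span g 1 fun v hv => absurd hv (hc v)
  obtain ⟨n, hn⟩ := h1
  rw [one_pow, Ideal.mem_span_singleton] at hn
  exact hg.not_isUnit (isUnit_of_dvd_one hn)

lemma pderiv_aeval (f : Fin 4 → MvPolynomial (Fin 2) ℂ) (j : Fin 2) (k : Fin 4)
    (hf : ∀ i, pderiv j (f i) = if i = k then 1 else 0) (F : MvPolynomial (Fin 4) ℂ) :
    pderiv j (aeval f F) = aeval f (pderiv k F) := by
  induction F using MvPolynomial.induction_on with
  | C a => simp
  | add p q hp hq => simp only [map_add, hp, hq]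
  | mul_X p i hp =>
      by_cases hik : i = k
      · subst hik
        rw [map_mul, aeval_X, pderiv_mul, hp, pderiv_mul, pderiv_X_self, hf i, if_pos rfl,
          map_add, map_mul, map_mul, aeval_X, map_one]
      · rw [map_mul, aeval_X, pderiv_mul, hp, pderiv_mul, pderiv_X_of_ne hik, hf i, if_neg hik,
          map_add, map_mul, map_mul, aeval_X, map_zero]

lemma aeval_eq_eval' (v : Fin 2 → ℂ) (p : MvPolynomial (Fin 2) ℂ) :
    (aeval v : MvPolynomial (Fin 2) ℂ →ₐ[ℂ] ℂ) p = eval v p := by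
  rw [← coe_aeval_eq_eval]; rfl

lemma eval_aeval (f : Fin 4 → MvPolynomial (Fin 2) ℂ) (v : Fin 2 → ℂ)
    (F : MvPolynomial (Fin 4) ℂ) :
    eval v (aeval f F) = eval (fun i => eval v (f i)) F := by
  induction F using MvPolynomial.induction_on with
  | C a => simp
  | add p q hp hq => rw [map_add, map_add, map_add, hp, hq]
  | mul_X p i hp => rw [map_mul, aeval_X, map_mul, map_mul, hp, eval_X]

lemma degreeOf_eq_zero_of_not_mem_vars {p : MvPolynomial (Fin 4) ℂ} {i : Fin 4}
    (h : i ∉ p.vars) : degreeOf i p = 0 := by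
  rw [← Nat.le_zero, degreeOf_le_iff]
  intro m hm
  by_contra hc
  exact h ((mem_vars i).mpr ⟨m, hm, Finsupp.mem_support_iff.mpr (by omega)⟩)

lemma not_mem_vars_of_degreeOf_eq_zero {p : MvPolynomial (Fin 4) ℂ} {i : Fin 4}
    (h : degreeOf i p = 0) : i ∉ p.vars := by
  intro hv
  obtain ⟨m, hm, hmi⟩ := (mem_vars i).mp hv
  have h1 := monomial_le_degreeOf i hm
  rw [h] at h1
  exact Finsupp.mem_support_iff.mp hmi (Nat.le_zero.mp h1)

end Lemma32Aux

set_option maxHeartbeats 2000000 in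
open Lemma32Aux in
/-- **Lemma 3.2.** If `γ` is a popular curve and `γ*` an associated curve of `γ`, then
`γ×γ×γ* ⊆ V ∩ Z(G)`, and `γ×γ×γ*` is not contained in `ℂ⁴×𝒯`. -/
theorem popular_product_in_W (F : MvPolynomial (Fin 4) ℂ) (δ : ℕ)
    (hirr : Irreducible F) (hdeg : F.totalDegree = δ)
    (hder : ∀ i : Fin 4, pderiv i F ≠ 0)
    (γ γs : Set (ℂ × ℂ)) (hpop : IsPopular F δ γ)
    (hassoc : IsIrredCurve γs ∧ ∀ q ∈ γs, γ ⊆ curveOf F (Prod.fst q) (Prod.snd q)) :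
    tripleProd γ γs ⊆ Vvar F ∩ {w | Gval F w = 0} ∧
    ¬ tripleProd γ γs ⊆ {w : Fin 6 → ℂ | (w 4, w 5) ∈ TT F} := by
  obtain ⟨⟨g1, hg1, hγ⟩, -⟩ := hpop
  obtain ⟨⟨g2, hg2, hγs⟩, hass⟩ := hassoc
  constructor
  · rintro w ⟨h1, h2, h3⟩
    have hV1 : eval ![w 0, w 1, w 4, w 5] F = 0 := by
      have h := hass (w 4, w 5) h3 h1
      simp only [curveOf, ev4, Set.mem_setOf_eq] at h
      exact h
    have hV2 : eval ![w 2, w 3, w 4, w 5] F = 0 := by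
      have h := hass (w 4, w 5) h3 h2
      simp only [curveOf, ev4, Set.mem_setOf_eq] at h
      exact h
    refine ⟨⟨hV1, hV2⟩, ?_⟩
    -- the key divisibility slice
    have hq0 : eval ![w 4, w 5] g2 = 0 := by
      have h3' := h3
      rw [hγs] at h3'
      simp only [ev2, Set.mem_setOf_eq] at h3'
      exact h3'
    have slice : ∀ x y : ℂ, (x, y) ∈ γ → ∃ H : ℂ,
        eval ![x, y, w 4, w 5] (pderiv 2 F) = eval ![w 4, w 5] (pderiv 0 g2) * H ∧
        eval ![x, y, w 4, w 5] (pderiv 3 F) = eval ![w 4, w 5] (pderiv 1 g2) * H := by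
      intro x y hxy
      set f : Fin 4 → MvPolynomial (Fin 2) ℂ := ![C x, C y, X 0, X 1] with hf
      have hfe : ∀ v : Fin 2 → ℂ, (fun i => eval v (f i)) = ![x, y, v 0, v 1] := by
        intro v; funext i; fin_cases i <;> simp [hf]
      have hdvd : g2 ∣ aeval f F := by
        apply dvd_of_vanishing _ _ hg2
        intro v hv
        rw [eval_aeval, hfe v]
        have hvs : (v 0, v 1) ∈ γs := by
          rw [hγs]
          show ev2 g2 (v 0, v 1) = 0
          unfold ev2
          simpa [vec2_eq v] using hv
        have h := hass _ hvs hxy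
        simp only [curveOf, ev4, Set.mem_setOf_eq] at h
        exact h
      obtain ⟨h, hh⟩ := hdvd
      refine ⟨eval ![w 4, w 5] h, ?_, ?_⟩
      · have hc : pderiv (0 : Fin 2) (aeval f F) = aeval f (pderiv 2 F) := by
          apply pderiv_aeval
          intro i; fin_cases i <;> simp [hf, pderiv_X_self, pderiv_X_of_ne]
        have := congrArg (eval ![w 4, w 5]) hc
        rw [hh, pderiv_mul, map_add, map_mul, map_mul, hq0, zero_mul, add_zero,
          eval_aeval, hfe] at this
        exact this.symm
      · have hc : pderiv (1 : Fin 2) (aeval f F) = aeval f (pderiv 3 F) := by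
          apply pderiv_aeval
          intro i; fin_cases i <;> simp [hf, pderiv_X_self, pderiv_X_of_ne]
        have := congrArg (eval ![w 4, w 5]) hc
        rw [hh, pderiv_mul, map_add, map_mul, map_mul, hq0, zero_mul, add_zero,
          eval_aeval, hfe] at this
        exact this.symm
    obtain ⟨H1, e1, e2⟩ := slice (w 0) (w 1) h1
    obtain ⟨H2, e3, e4⟩ := slice (w 2) (w 3) h2
    show Gval F w = 0
    unfold Gval
    rw [e1, e2, e3, e4]
    ring
  · -- not contained in C^4 × TT
    have hns : ¬ (γs ⊆ TT F) := by
      intro hsub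
      set r : Fin 2 → Fin 4 := ![2, 3] with hr
      set h : MvPolynomial (Fin 4) ℂ := rename r g2 with hhdef
      have hFmem : F ∈ (Ideal.span ({h} : Set (MvPolynomial (Fin 4) ℂ))).radical := by
        apply mem_radical_span
        intro v hv
        rw [hhdef, eval_rename] at hv
        have hvr : (v ∘ r) = ![v 2, v 3] := by funext i; fin_cases i <;> rfl
        rw [hvr] at hv
        have hvγs : (v 2, v 3) ∈ γs := by
          rw [hγs]
          simp only [ev2, Set.mem_setOf_eq]
          exact hv
        have hz := hsub hvγs (v 0) (v 1)
        simp only [ev4] at hz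
        rw [← vec4_eq v]
        exact hz
      obtain ⟨n, hn⟩ := hFmem
      rw [Ideal.mem_span_singleton] at hn
      have hg2ne : g2 ≠ 0 := hg2.ne_zero
      have hrinj : Function.Injective r := by
        rw [hr]; decide
      have hh0 : h ≠ 0 := fun h0 =>
        hg2ne (rename_injective r hrinj (by rw [map_zero, ← hhdef]; exact h0))
      have hhnu : ¬ IsUnit h := by
        intro hu
        have hmap : IsUnit (aeval (![0, 0, X 0, X 1] : Fin 4 → MvPolynomial (Fin 2) ℂ) h) :=
          hu.map _
        rw [hhdef, aeval_rename] at hmap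
        have : ((![0, 0, X 0, X 1] : Fin 4 → MvPolynomial (Fin 2) ℂ) ∘ r) = X := by
          funext i; fin_cases i <;> rfl
        rw [this, aeval_X_left_apply] at hmap
        exact hg2.not_isUnit hmap
      obtain ⟨q, hqirr, hqdvd⟩ := WfDvdMonoid.exists_irreducible_factor hhnu hh0
      have hqF : q ∣ F :=
        (UniqueFactorizationMonoid.irreducible_iff_prime.mp hqirr).dvd_of_dvd_pow
          (hqdvd.trans hn)
      have hasq : Associated q F := hqirr.associated_of_dvd hirr hqF
      have hFh : F ∣ h := (hasq.symm.dvd).trans hqdvd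
      -- degree in variable 0
      have hvars : (0 : Fin 4) ∉ h.vars := by
        intro hm
        obtain ⟨i, -, hi⟩ := mem_vars_rename r g2 hm
        fin_cases i <;> exact absurd hi.symm (by rw [hr]; decide)
      have hd0h : degreeOf 0 h = 0 := degreeOf_eq_zero_of_not_mem_vars hvars
      have hd0F : degreeOf 0 F = 0 := by
        have hdvd' : (finSuccEquiv ℂ 3) F ∣ (finSuccEquiv ℂ 3) h :=
          map_dvd (finSuccEquiv ℂ 3).toAlgHom hFh
        have hne : (finSuccEquiv ℂ 3) h ≠ 0 := fun h0 =>
          hh0 ((finSuccEquiv ℂ 3).injective (by rw [h0, map_zero]))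
        have := Polynomial.natDegree_le_of_dvd hdvd' hne
        rw [natDegree_finSuccEquiv, natDegree_finSuccEquiv, hd0h, Nat.le_zero] at this
        exact this
      exact hder 0 (pderiv_eq_zero_of_notMem_vars (not_mem_vars_of_degreeOf_eq_zero hd0F))
    obtain ⟨q, hqγs, hqTT⟩ := Set.not_subset.mp hns
    obtain ⟨v, hv⟩ := exists_zero g1 hg1
    have hvγ : (v 0, v 1) ∈ γ := by
      rw [hγ]
      simp only [ev2, Set.mem_setOf_eq]
      rw [vec2_eq v]
      exact hv
    intro hc
    have hw : (![v 0, v 1, v 0, v 1, q.1, q.2] : Fin 6 → ℂ) ∈ tripleProd γ γs := by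
      refine ⟨?_, ?_, ?_⟩
      · simpa using hvγ
      · simpa using hvγ
      · simpa using hqγs
    have hmem := hc hw
    simp only [Set.mem_setOf_eq] at hmem
    apply hqTT
    simpa using hmem
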